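/- arXiv:1304.5719 — 3 statements merged into one kernel-verified Lean document; each statement's English description precedes it below -/
import Mathlib

section
/- An algorithm A stabilises in time t if and only if for every faulty set F with |F| ≤ f: (1) in G_F(A) the only successor of the all-0 configuration is the all-1 configuration and vice versa, and (2) every directed walk of length t in G_F(A) reaches the all-0 or all-1 configuration. -/
/-- Configuration `y` is reachable from `x` (given faulty set `F`): for each non-faulty
node `i` there is an observed configuration agreeing with `x` on all non-faulty
coordinates from which `i` transitions to `y i`. -/
def Reach {n s : ℕ} (A : Fin n → (Fin n → Fin s) → Fin s) (F : Finset (Fin n))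
    (x y : Fin n → Fin s) : Prop :=
  ∀ i ∉ F, ∃ u : Fin n → Fin s, (∀ j ∉ F, u j = x j) ∧ A i u = y i

/-- Two configurations are equal as actual configurations: they agree on all
non-faulty coordinates. -/
def EqCfg {n s : ℕ} (F : Finset (Fin n)) (x y : Fin n → Fin s) : Prop :=
  ∀ i ∉ F, x i = y i

/-- An execution: each configuration is reachable from its predecessor. -/
def Exec {n s : ℕ} (A : Fin n → (Fin n → Fin s) → Fin s) (F : Finset (Fin n))
    (X : ℕ → Fin n → Fin s) : Prop :=
  ∀ r, Reach A F (X r) (X (r + 1))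

/-- An execution stabilises in time `t`: its `t`-tail is `(0̄, 1̄, 0̄, …)` or
`(1̄, 0̄, 1̄, …)` on the non-faulty nodes. -/
def StabilisesInTime {n s : ℕ} (F : Finset (Fin n)) (X : ℕ → Fin n → Fin s)
    (t : ℕ) : Prop :=
  (∀ j, ∀ i ∉ F, ((X (t + j) i : ℕ) = j % 2)) ∨
  (∀ j, ∀ i ∉ F, ((X (t + j) i : ℕ) = (j + 1) % 2))

/-- Algorithm `A` stabilises in time `t` tolerating `f` faults: for every faulty set
of size at most `f`, every execution stabilises in time `t`. -/
def AlgStabilises {n s : ℕ} (A : Fin n → (Fin n → Fin s) → Fin s) (f t : ℕ) : Prop :=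
  ∀ F : Finset (Fin n), F.card ≤ f → ∀ X : ℕ → Fin n → Fin s,
    Exec A F X → StabilisesInTime F X t

/-- The all-zero configuration. -/
def zeroCfg (n : ℕ) {s : ℕ} (hs : 0 < s) : Fin n → Fin s := fun _ => ⟨0, hs⟩

/-- The all-one configuration. -/
def oneCfg (n : ℕ) {s : ℕ} (hs : 1 < s) : Fin n → Fin s := fun _ => ⟨1, hs⟩

section Aux

variable {n s : ℕ} (A : Fin n → (Fin n → Fin s) → Fin s) (F : Finset (Fin n))

/-- A canonical successor of a configuration. -/
def nextC (x : Fin n → Fin s) : Fin n → Fin s := fun i => A i x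

lemma reach_next (x : Fin n → Fin s) : Reach A F x (nextC A x) :=
  fun _ _ => ⟨x, fun _ _ => rfl, rfl⟩

lemma reach_congr {x x' y : Fin n → Fin s} (h : EqCfg F x x')
    (hr : Reach A F x y) : Reach A F x' y := by
  intro i hi
  obtain ⟨u, hu, hA⟩ := hr i hi
  exact ⟨u, fun j hj => (hu j hj).trans (h j hj), hA⟩

/-- Extend a walk of length `t` to an infinite execution. -/
def extendW (W : ℕ → Fin n → Fin s) (t : ℕ) : ℕ → Fin n → Fin s
  | 0 => W 0
  | r + 1 => if r + 1 ≤ t then W (r + 1) else nextC A (extendW W t r)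

lemma extendW_eq (W : ℕ → Fin n → Fin s) (t : ℕ) :
    ∀ r ≤ t, extendW A W t r = W r := by
  intro r hr
  cases r with
  | zero => rfl
  | succ m => simp [extendW, hr]

lemma extendW_exec (W : ℕ → Fin n → Fin s) (t : ℕ)
    (h : ∀ r < t, Reach A F (W r) (W (r + 1))) : Exec A F (extendW A W t) := by
  intro r
  by_cases hr : r + 1 ≤ t
  · rw [extendW_eq A W t r (by omega), extendW_eq A W t (r + 1) hr]
    exact h r (by omega)
  · show Reach A F _ (extendW A W t (r + 1))
    simp only [extendW, if_neg hr]
    exact reach_next A F _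

/-- Consecutive values of a stabilised execution sum to 1 after time `t`. -/
lemma stab_consec {X : ℕ → Fin n → Fin s} {t : ℕ}
    (h : StabilisesInTime F X t) (j : ℕ) {i : Fin n} (hi : i ∉ F) :
    (X (t + j) i : ℕ) + (X (t + j + 1) i : ℕ) = 1 := by
  rcases h with h | h
  · have h1 := h j i hi
    have h2 := h (j + 1) i hi
    rw [show t + j + 1 = t + (j + 1) by omega] at *
    omega
  · have h1 := h j i hi
    have h2 := h (j + 1) i hi
    rw [show t + j + 1 = t + (j + 1) by omega] at *
    omega

end Aux

/-- Lemma `projt`: an algorithm `A` stabilises in time `t` iff for every faulty set `F`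
with `|F| ≤ f`: (1) in the projection graph the only successor of `0̄` is `1̄` and
vice versa, and (2) every directed walk of length `t` reaches `0̄` or `1̄`. -/
theorem stabilises_iff_projection_graph {n s f t : ℕ} (hs : 1 < s)
    (A : Fin n → (Fin n → Fin s) → Fin s) :
    AlgStabilises A f t ↔
      ∀ F : Finset (Fin n), F.card ≤ f →
        ((∀ y, Reach A F (zeroCfg n (by omega)) y → EqCfg F y (oneCfg n hs)) ∧
         (∀ y, Reach A F (oneCfg n hs) y → EqCfg F y (zeroCfg n (by omega))) ∧
         (∀ W : ℕ → Fin n → Fin s,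
            (∀ r < t, Reach A F (W r) (W (r + 1))) →
            ∃ j ≤ t, EqCfg F (W j) (zeroCfg n (by omega)) ∨
              EqCfg F (W j) (oneCfg n hs))) := by
  have hs0 : 0 < s := by omega
  constructor
  · intro hst F hF
    -- canonical execution starting from the all-zero configuration
    set X0 : ℕ → Fin n → Fin s := extendW A (fun _ => zeroCfg n hs0) 0 with hX0def
    have hX0exec : Exec A F X0 := extendW_exec A F _ 0 (by omega)
    have hX0stab := hst F hF X0 hX0exec
    obtain ⟨r0, hr0t, hr0⟩ : ∃ r, t ≤ r ∧ ∀ i ∉ F, (X0 r i : ℕ) = 0 := by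
      rcases hX0stab with h | h
      · exact ⟨t, le_rfl, fun i hi => by have := h 0 i hi; simp only [Nat.add_zero] at this; omega⟩
      · exact ⟨t + 1, by omega, fun i hi => by have := h 1 i hi; omega⟩
    obtain ⟨r1, hr1t, hr1⟩ : ∃ r, t ≤ r ∧ ∀ i ∉ F, (X0 r i : ℕ) = 1 := by
      rcases hX0stab with h | h
      · exact ⟨t + 1, by omega, fun i hi => by have := h 1 i hi; omega⟩
      · exact ⟨t, le_rfl, fun i hi => by have := h 0 i hi; simp only [Nat.add_zero] at this; omega⟩
    -- key fact: at any time `r ≥ t`, any successor of `X r` flips values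
    have key : ∀ r, t ≤ r → ∀ X : ℕ → Fin n → Fin s, Exec A F X →
        ∀ y, Reach A F (X r) y → ∀ i ∉ F, (X r i : ℕ) + (y i : ℕ) = 1 := by
      intro r hrt X hXe y hy i hi
      set W' : ℕ → Fin n → Fin s := fun m => if m ≤ r then X m else y with hW'
      have hwalk : ∀ m < r + 1, Reach A F (W' m) (W' (m + 1)) := by
        intro m hm
        by_cases hm1 : m + 1 ≤ r
        · simpa [hW', show m ≤ r by omega, hm1] using hXe m
        · have hmr : m = r := by omega
          subst hmr
          simpa [hW', show ¬ (m + 1 ≤ m) by omega] using hy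
      have hexec := extendW_exec A F W' (r + 1) (fun m hm => hwalk m hm)
      have hstab := hst F hF _ hexec
      have hc := stab_consec F hstab (r - t) hi
      rw [show t + (r - t) = r by omega] at hc
      have e1 : extendW A W' (r + 1) r = X r := by
        rw [extendW_eq A W' (r + 1) r (by omega)]
        simp [hW']
      have e2 : extendW A W' (r + 1) (r + 1) = y := by
        rw [extendW_eq A W' (r + 1) (r + 1) le_rfl]
        simp [hW', show ¬ (r + 1 ≤ r) by omega]
      rw [e1, e2] at hc
      exact hc
    refine ⟨fun y hy i hi => ?_, fun y hy i hi => ?_, fun W hW => ?_⟩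
    · have he : EqCfg F (zeroCfg n hs0) (X0 r0) := fun i' hi' =>
        Fin.ext (by simp [zeroCfg, hr0 i' hi'])
      have hk := key r0 hr0t X0 hX0exec y (reach_congr A F he hy) i hi
      have h0 := hr0 i hi
      apply Fin.ext
      simp only [oneCfg]
      omega
    · have he : EqCfg F (oneCfg n hs) (X0 r1) := fun i' hi' =>
        Fin.ext (by simp [oneCfg, hr1 i' hi'])
      have hk := key r1 hr1t X0 hX0exec y (reach_congr A F he hy) i hi
      have h1 := hr1 i hi
      apply Fin.ext
      simp only [zeroCfg]
      omega
    · have hexec := extendW_exec A F W t hW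
      have hstab := hst F hF _ hexec
      refine ⟨t, le_rfl, ?_⟩
      rcases hstab with h | h
      · left
        intro i hi
        have h0 := h 0 i hi
        simp only [Nat.add_zero] at h0
        rw [extendW_eq A W t t le_rfl] at h0
        apply Fin.ext
        simp only [zeroCfg]
        omega
      · right
        intro i hi
        have h0 := h 0 i hi
        simp only [Nat.add_zero] at h0
        rw [extendW_eq A W t t le_rfl] at h0
        apply Fin.ext
        simp only [oneCfg]
        omega
  · intro h F hF X hX
    obtain ⟨h1, h2, h3⟩ := h F hF
    obtain ⟨j, hjt, hj⟩ := h3 X (fun r _ => hX r)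
    obtain ⟨c, hc1, hc⟩ : ∃ c, c ≤ 1 ∧ ∀ i ∉ F, (X j i : ℕ) = c := by
      rcases hj with hj | hj
      · exact ⟨0, by omega, fun i hi => by rw [hj i hi]; rfl⟩
      · exact ⟨1, by omega, fun i hi => by rw [hj i hi]; rfl⟩
    have main : ∀ k, ∀ i ∉ F, (X (j + k) i : ℕ) = (k + c) % 2 := by
      intro k
      induction k with
      | zero =>
        intro i hi
        simp only [Nat.add_zero]
        have := hc i hi
        omega
      | succ m ih =>
        have hR : Reach A F (X (j + m)) (X (j + m + 1)) := hX (j + m)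
        by_cases hpar : (m + c) % 2 = 0
        · have he : EqCfg F (X (j + m)) (zeroCfg n hs0) := by
            intro i hi
            apply Fin.ext
            rw [ih i hi]
            simp [zeroCfg, hpar]
          have hnext := h1 _ (reach_congr A F he hR)
          intro i hi
          rw [show j + (m + 1) = j + m + 1 by omega, hnext i hi]
          simp only [oneCfg]
          omega
        · have he : EqCfg F (X (j + m)) (oneCfg n hs) := by
            intro i hi
            apply Fin.ext
            rw [ih i hi]
            simp only [oneCfg]
            omega
          have hnext := h2 _ (reach_congr A F he hR)
          intro i hi
          rw [show j + (m + 1) = j + m + 1 by omega, hnext i hi]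
          simp only [zeroCfg]
          omega
    by_cases hpar : (t - j + c) % 2 = 0
    · left
      intro j' i hi
      have := main (t - j + j') i hi
      rw [show j + (t - j + j') = t + j' by omega] at this
      omega
    · right
      intro j' i hi
      have := main (t - j + j') i hi
      rw [show j + (t - j + j') = t + j' by omega] at this
      omega
end

section
/- If an algorithm A stabilises in time t and x is any actual configuration reachable from (after t-1 steps of) a stabilised execution at time r-1 ≥ t-1, then exactly one of the all-0 and all-1 configurations is a successor of x in the projection graph; i.e., if both 0̄ and 1̄ were successors of x, then by the mixing lemma some configuration other than 0̄ and 1̄ would also be a successor, contradicting stabilisation. -/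
/-- If all successors of `x` lie in `{0̄, 1̄}` and there are at least two non-faulty
nodes, then exactly one of `0̄` and `1̄` is a successor of `x`: if both were, the
mixing lemma would produce a successor different from both `0̄` and `1̄`,
contradicting the assumption. -/
theorem unique_alternation_successor {n s f : ℕ} (hs : 1 < s)
    (A : Fin n → (Fin n → Fin s) → Fin s) (F : Finset (Fin n)) (hF : F.card ≤ f)
    (i j : Fin n) (hi : i ∉ F) (hj : j ∉ F) (hij : i ≠ j)
    (x : Fin n → Fin s)
    (hsucc : ∀ y, Reach A F x y →
      EqCfg F y (zeroCfg n (by omega)) ∨ EqCfg F y (oneCfg n hs)) :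
    Xor' (Reach A F x (zeroCfg n (by omega))) (Reach A F x (oneCfg n hs)) := by
  have hs0 : 0 < s := by omega
  -- not both
  have hnotboth : ¬ (Reach A F x (zeroCfg n hs0) ∧ Reach A F x (oneCfg n hs)) := by
    rintro ⟨h0, h1⟩
    set w : Fin n → Fin s := fun k => if k = i then ⟨0, hs0⟩ else ⟨1, hs⟩ with hw
    have hreach : Reach A F x w := by
      intro k hk
      by_cases hki : k = i
      · subst hki
        obtain ⟨u, hu, hAu⟩ := h0 k hk
        exact ⟨u, hu, by rw [hAu]; simp [hw, zeroCfg]⟩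
      · obtain ⟨u, hu, hAu⟩ := h1 k hk
        exact ⟨u, hu, by simp [hw, hki, hAu, oneCfg]⟩
    rcases hsucc w hreach with h | h
    · have := h j hj
      rw [hw] at this
      simp only [if_neg (Ne.symm hij)] at this
      simp [zeroCfg, Fin.ext_iff] at this
    · have := h i hi
      rw [hw] at this
      simp only [if_pos rfl] at this
      simp [oneCfg, Fin.ext_iff] at this
  -- at least one
  set y : Fin n → Fin s := fun k => A k x with hy
  have hry : Reach A F x y := fun k _ => ⟨x, fun _ _ => rfl, rfl⟩
  rcases hsucc y hry with h | h
  · left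
    constructor
    · intro k hk
      exact ⟨x, fun _ _ => rfl, by rw [← h k hk]⟩
    · intro h1
      exact hnotboth ⟨fun k hk => ⟨x, fun _ _ => rfl, by rw [← h k hk]⟩, h1⟩
  · right
    constructor
    · intro k hk
      exact ⟨x, fun _ _ => rfl, by rw [← h k hk]⟩
    · intro h0
      exact hnotboth ⟨h0, fun k hk => ⟨x, fun _ _ => rfl, by rw [← h k hk]⟩⟩
end

section
/- Suppose a deterministic 2-counting algorithm A for n nodes, f faults, stabilising in time t, exists, where during stabilised operation configuration x(a) leads after j rounds to all non-faulty nodes outputting (a + j) mod 2. Then binary consensus for n nodes tolerating f Byzantine faults is solvable in t rounds: initialise node i with the i-th component of x(a) where a is its consensus input, run A for t rounds (complementing inputs if t is odd), and output the stabilised value; agreement and validity hold. -/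
/-- Reduction from 2-counting to binary consensus (Lemma 1): if `A` is a 2-counting
algorithm stabilising in time `t`, and `x 0`, `x 1` are configurations such that
starting from `x a` all non-faulty nodes output `(a + j) mod 2` after `j` rounds,
then initialising node `i` with the `i`-th component of `x a` where `a` is its
consensus input (complementing inputs if `t` is odd) and running `A` for `t` rounds
solves binary consensus: agreement and validity hold. -/
theorem counting_solves_consensus {n s f t : ℕ}
    (A : Fin n → (Fin n → Fin s) → Fin s)
    (hA : AlgStabilises A f t)
    (x : ℕ → Fin n → Fin s)
    (hx : ∀ a < 2, ∀ F : Finset (Fin n), F.card ≤ f →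
      ∀ X : ℕ → Fin n → Fin s, Exec A F X →
        (∀ i ∉ F, X 0 i = x a i) →
        ∀ j, ∀ i ∉ F, ((X j i : ℕ) = (a + j) % 2)) :
    ∀ inp : Fin n → ℕ, (∀ i, inp i < 2) →
      ∀ F : Finset (Fin n), F.card ≤ f →
        ∀ X : ℕ → Fin n → Fin s, Exec A F X →
          (∀ i ∉ F, X 0 i = x (if Even t then inp i else 1 - inp i) i) →
          (∀ i ∉ F, ∀ j ∉ F, X t i = X t j) ∧
          (∀ a, (∀ i, inp i = a) → ∀ i ∉ F, ((X t i : ℕ) = a)) := by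
  intro inp hinp F hF X hX h0
  constructor
  · intro i hi j hj
    rcases hA F hF X hX with h | h
    · have hi0 := h 0 i hi
      have hj0 := h 0 j hj
      simp only [Nat.add_zero] at hi0 hj0
      apply Fin.ext
      omega
    · have hi0 := h 0 i hi
      have hj0 := h 0 j hj
      simp only [Nat.add_zero] at hi0 hj0
      apply Fin.ext
      omega
  · intro a ha i hi
    have ha2 : a < 2 := by have h1 := hinp i; have h2 := ha i; omega
    set b : ℕ := if Even t then a else 1 - a with hb
    have hb2 : b < 2 := by rw [hb]; split <;> omega
    have h0' : ∀ i ∉ F, X 0 i = x b i := by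
      intro k hk
      have := h0 k hk
      rwa [ha k] at this
    have := hx b hb2 F hF X hX h0' t i hi
    rw [this, hb]
    rcases Nat.even_or_odd t with he | ho
    · rw [if_pos he]
      obtain ⟨m, hm⟩ := he
      omega
    · rw [if_neg (Nat.not_even_iff_odd.mpr ho)]
      obtain ⟨m, hm⟩ := ho
      omega
end
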